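/- arXiv:2212.11404 — 2 statements merged into one kernel-verified Lean document; each statement's English description precedes it below -/
import Mathlib

section
/- With the circle setup and for n ≥ 2: the subspace of uE^c(n) where all radii r_j are positive coincides with uE′(n), and the inclusion uE′(n) ↪ uE^c(n) is an equivariant homotopy equivalence: there exist a continuous map g : uE^c(n) → uE′(n) and continuous homotopies from g composed with the inclusion to the identity of uE′(n) and from the inclusion composed with g to the identity of uE^c(n), such that g and every time-slice of both homotopies commute with: (a) simultaneous translation of all ζ_j by a fixed element of S¹; (b) the cyclic shift of indices j ↦ j+1 mod n applied simultaneously to the ζ_j, r_j and φ_j; (c) translation of each individual ζ_j by elements of ker π. -/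
noncomputable section

open Set

/-- The additive circle `S¹ = ℝ/2πℤ`. -/
abbrev S1 : Type := AddCircle (2 * Real.pi)

/-- The additive circle `B = ℝ/(2π/m)ℤ`, modeling `S¹/C_m`. -/
abbrev CircB (m : ℕ) : Type := AddCircle (2 * Real.pi / m)

/-- The arc `A(ζ, r) = {π(ζ) + s̄ : |s| < r} ∪ {π(ζ)} ⊆ B`. -/
def arcA (m : ℕ) (pr : S1 → CircB m) (ζ : S1) (r : ℝ) : Set (CircB m) :=
  insert (pr ζ) {z | ∃ s : ℝ, |s| < r ∧ z = pr ζ + ((s : ℝ) : CircB m)}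

/-- The space `uE′(n)` of configurations of disjoint arcs together with gap coordinates. -/
def uE' (m n : ℕ) [NeZero n] (pr : S1 → CircB m) :
    Set ((Fin n → S1 × ℝ) × (Fin n → ℝ)) :=
  {x | (∀ j, (x.1 j).2 ∈ Ioc 0 (Real.pi / m)) ∧
    (∀ j, x.2 j ∈ Ioo 0 (2 * Real.pi / m)) ∧
    (∀ i j, i ≠ j → arcA m pr (x.1 i).1 (x.1 i).2 ∩ arcA m pr (x.1 j).1 (x.1 j).2 = ∅) ∧
    (∀ j, pr (x.1 (j + 1)).1 = pr (x.1 j).1 + ((x.2 j : ℝ) : CircB m)) ∧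
    ∑ j, x.2 j = 2 * Real.pi / m}

/-- The extension `uE^c(n)` allowing radii and gaps to degenerate to `0`:  if two arcs
meet then both must have radius `0`. -/
def uEc (m n : ℕ) [NeZero n] (pr : S1 → CircB m) :
    Set ((Fin n → S1 × ℝ) × (Fin n → ℝ)) :=
  {x | (∀ j, (x.1 j).2 ∈ Icc 0 (Real.pi / m)) ∧
    (∀ j, x.2 j ∈ Icc 0 (2 * Real.pi / m)) ∧
    (∀ i j, i ≠ j →
      (arcA m pr (x.1 i).1 (x.1 i).2 ∩ arcA m pr (x.1 j).1 (x.1 j).2).Nonempty →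
      (x.1 i).2 = 0 ∧ (x.1 j).2 = 0) ∧
    (∀ j, pr (x.1 (j + 1)).1 = pr (x.1 j).1 + ((x.2 j : ℝ) : CircB m)) ∧
    ∑ j, x.2 j = 2 * Real.pi / m}

/-- Simultaneous translation of all circle coordinates by `a ∈ S¹`. -/
def transP (n : ℕ) (a : S1) (y : (Fin n → S1 × ℝ) × (Fin n → ℝ)) :
    (Fin n → S1 × ℝ) × (Fin n → ℝ) :=
  (fun j => ((y.1 j).1 + a, (y.1 j).2), y.2)

/-- Cyclic shift of indices `j ↦ j + 1 (mod n)`. -/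
def shiftP (n : ℕ) [NeZero n] (y : (Fin n → S1 × ℝ) × (Fin n → ℝ)) :
    (Fin n → S1 × ℝ) × (Fin n → ℝ) :=
  (fun j => y.1 (j - 1), fun j => y.2 (j - 1))

/-- Translation of each individual circle coordinate `ζ_j` by `k j`. -/
def kerP (n : ℕ) (k : Fin n → S1) (y : (Fin n → S1 × ℝ) × (Fin n → ℝ)) :
    (Fin n → S1 × ℝ) × (Fin n → ℝ) :=
  (fun j => ((y.1 j).1 + k j, (y.1 j).2), y.2)

/-!
The homotopy moves a configuration linearly towards the equally spaced configuration, with all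
gaps `s = 2π/(mn)` and all radii `s/2`: radii and gaps are interpolated linearly, and the centre
`ζ_j` is rotated by `(1 - t) o_j`, where `o` solves `o_{j+1} = o_j + (s - φ_j)` so that the chain
condition `π(ζ_{j+1}) = π(ζ_j) + φ_j` is preserved. Taking the mean-zero solution makes `o` a
function of the gaps alone, compatible with the cyclic shift, which gives the equivariance.

For `i < j`, a configuration of `uE^c(n)` satisfies `r_i + r_j ≤ P ≤ 2π/m - (r_i + r_j)`, where
`P` is the sum of the gaps from `i` to `j`. These inequalities are linear in radii and gaps, so they
survive the interpolation, and for `t < 1` the radii are positive, which forces disjoint arcs.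
-/

namespace CyclicArcs

open Real
open scoped Fin.NatCast Fin.CommRing

abbrev Config (n : ℕ) : Type := (Fin n → S1 × ℝ) × (Fin n → ℝ)

section Arcs

variable {m : ℕ} {pr : S1 → CircB m}

theorem map_add_of_forall_coe {p q : ℝ} {f : AddCircle p → AddCircle q}
    (hf : ∀ s : ℝ, f s = (s : AddCircle q)) (x y : AddCircle p) : f (x + y) = f x + f y := by
  induction x using QuotientAddGroup.induction_on with | H a => ?_
  induction y using QuotientAddGroup.induction_on with | H b => ?_
  rw [← QuotientAddGroup.mk_add, hf, hf, hf, QuotientAddGroup.mk_add]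

theorem mem_arcA_iff {ζ : S1} {r : ℝ} {z : CircB m} :
    z ∈ arcA m pr ζ r ↔ ∃ s : ℝ, (s = 0 ∨ |s| < r) ∧ z = pr ζ + s := by
  simp only [arcA, mem_insert_iff, mem_ofPred_eq]
  constructor
  · rintro (rfl | ⟨s, hs, rfl⟩)
    · exact ⟨0, .inl rfl, by simp⟩
    · exact ⟨s, .inr hs, rfl⟩
  · rintro ⟨s, rfl | hs, rfl⟩
    · simp
    · exact .inr ⟨s, hs, rfl⟩

theorem arcA_inter_nonempty_iff {ζ₁ ζ₂ : S1} {r₁ r₂ : ℝ} (h₁ : 0 ≤ r₁) (h₂ : 0 ≤ r₂) :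
    (arcA m pr ζ₁ r₁ ∩ arcA m pr ζ₂ r₂).Nonempty ↔
      ∃ d : ℝ, (d : CircB m) = pr ζ₂ - pr ζ₁ ∧ (d = 0 ∨ |d| < r₁ + r₂) := by
  constructor
  · rintro ⟨z, hz₁, hz₂⟩
    obtain ⟨s, hs, rfl⟩ := mem_arcA_iff.mp hz₁
    obtain ⟨u, hu, hsu⟩ := mem_arcA_iff.mp hz₂
    refine ⟨s - u, by rw [AddCircle.coe_sub, eq_sub_of_add_eq hsu.symm]; abel, ?_⟩
    rcases hs with rfl | hs <;> rcases hu with rfl | hu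
    · simp
    · exact .inr (by simpa using hu.trans_le (le_add_of_nonneg_left h₁))
    · exact .inr (by simpa using hs.trans_le (le_add_of_nonneg_right h₂))
    · exact .inr ((abs_sub _ _).trans_lt (add_lt_add hs hu))
  · rintro ⟨d, hd, rfl | hdR⟩
    · have hζ : pr ζ₂ = pr ζ₁ := by simpa [eq_comm, sub_eq_zero] using hd
      exact ⟨pr ζ₁, mem_arcA_iff.mpr ⟨0, .inl rfl, by simp⟩,
        mem_arcA_iff.mpr ⟨0, .inl rfl, by simp [hζ]⟩⟩
    -- split `d` between the two arcs in proportion to their radii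
    have hR : 0 < r₁ + r₂ := (abs_nonneg d).trans_lt hdR
    have hpart : ∀ r, 0 ≤ r → d * r / (r₁ + r₂) = 0 ∨ |d * r / (r₁ + r₂)| < r := by
      intro r hr
      rcases hr.eq_or_lt with rfl | hr
      · simp
      · right
        rw [abs_div, abs_mul, abs_of_pos hr, abs_of_pos hR, div_lt_iff₀ hR]
        nlinarith
    refine ⟨pr ζ₁ + (d * r₁ / (r₁ + r₂) : ℝ), mem_arcA_iff.mpr ⟨_, hpart r₁ h₁, rfl⟩,
      mem_arcA_iff.mpr ⟨-(d * r₂ / (r₁ + r₂)), ?_, ?_⟩⟩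
    · simpa only [neg_eq_zero, abs_neg] using hpart r₂ h₂
    · have hsplit : d * r₁ / (r₁ + r₂) = d + -(d * r₂ / (r₁ + r₂)) := by field_simp; ring
      rw [hsplit, AddCircle.coe_add, ← add_assoc, hd, add_sub_cancel]

theorem not_arcA_inter_nonempty_of_gap {ζ₁ ζ₂ : S1} {r₁ r₂ P : ℝ} (h₁ : 0 ≤ r₁) (h₂ : 0 ≤ r₂)
    (hR : 0 < r₁ + r₂) (hP : pr ζ₂ = pr ζ₁ + P) (hlo : r₁ + r₂ ≤ P)
    (hhi : P ≤ 2 * π / m - (r₁ + r₂)) :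
    ¬ (arcA m pr ζ₁ r₁ ∩ arcA m pr ζ₂ r₂).Nonempty := by
  rw [arcA_inter_nonempty_iff h₁ h₂]
  rintro ⟨d, hd, hdR⟩
  replace hdR : |d| < r₁ + r₂ := hdR.elim (fun hd0 => by simpa [hd0]) id
  obtain ⟨k, hk⟩ := (AddCircle.coe_eq_zero_iff _).mp
    (show ((P - d : ℝ) : CircB m) = 0 by rw [AddCircle.coe_sub, hd, hP]; abel)
  rw [zsmul_eq_mul] at hk
  obtain ⟨hd₁, hd₂⟩ := abs_lt.mp hdR
  -- `P - d` lies strictly between `0` and the period, so it is not a multiple of it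
  have hc : 0 < 2 * π / m := by linarith
  rcases le_or_gt k 0 with hk0 | hk0
  · linarith [mul_nonpos_of_nonpos_of_nonneg (Int.cast_nonpos.mpr hk0) hc.le]
  · linarith [le_mul_of_one_le_left hc.le ((by exact_mod_cast hk0 : (1 : ℝ) ≤ k))]

end Arcs

section Cyclic

variable {n : ℕ} [NeZero n]

theorem eq_add_sum_Ico_of_forall_add_one {G : Type*} [AddCommGroup G] {f h : Fin n → G}
    (hf : ∀ j, f (j + 1) = f j + h j) {i j : Fin n} (hij : i ≤ j) :
    f j = f i + ∑ l ∈ Finset.Ico i j, h l := by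
  have hstep : ∀ k : ℕ, f ((k + 1 : ℕ) : Fin n) - f (k : Fin n) = h k := fun k => by
    rw [Nat.cast_succ, hf, add_sub_cancel_left]
  have hsum : ∑ l ∈ Finset.Ico i j, h l = ∑ k ∈ Finset.Ico (i : ℕ) j, h k := by
    rw [← Fin.map_valEmbedding_Ico, Finset.sum_map]
    simp [Fin.cast_val_eq_self]
  rw [hsum, ← Finset.sum_congr rfl fun k _ => hstep k, Finset.sum_Ico_sub (fun k : ℕ => f k) hij,
    Fin.cast_val_eq_self, Fin.cast_val_eq_self, add_sub_cancel]

variable {K : Type*} [Field K]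

def potential (g : Fin n → K) (j : Fin n) : K :=
  (∑ i : Fin n, (i : K) * g (j + i)) / n

theorem potential_add_one [CharZero K] {g : Fin n → K} (hg : ∑ i, g i = 0) (j : Fin n) :
    potential g (j + 1) = potential g j + g j := by
  obtain ⟨n, rfl⟩ := Nat.exists_eq_succ_of_ne_zero (NeZero.ne n)
  have hval : ∀ k : Fin (n + 1),
      (((k - 1 : Fin (n + 1)) : ℕ) : K) = k - 1 + if k = 0 then ((n + 1 : ℕ) : K) else 0 := by
    intro k
    rw [Fin.coe_sub_one]
    split_ifs with hk
    · simp [hk]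
    · rw [Nat.cast_sub (Nat.one_le_iff_ne_zero.mpr (Fin.val_ne_zero_iff.mpr hk))]
      simp
  have hg' : ∑ k : Fin (n + 1), g (j + k) = 0 := (Equiv.sum_comp (Equiv.addLeft j) g).trans hg
  unfold potential
  rw [← (Equiv.subRight (1 : Fin (n + 1))).sum_comp]
  simp only [Equiv.subRight_apply, show ∀ k, j + 1 + (k - 1) = j + k from fun k => by ring, hval,
    add_mul, sub_mul, ite_mul, zero_mul, Finset.sum_add_distrib, Finset.sum_sub_distrib,
    Finset.sum_ite_eq', Finset.mem_univ, if_true, one_mul, hg', add_zero]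
  field_simp
  ring

theorem potential_comp_sub_one (g : Fin n → K) (j : Fin n) :
    potential (fun l => g (l - 1)) j = potential g (j - 1) := by
  simp only [potential, show ∀ i, j + i - 1 = j - 1 + i from fun i => by ring]

end Cyclic

section Configurations

variable {m n : ℕ} [NeZero n] {pr : S1 → CircB m}

theorem pr_eq_add_sum_Ico {ζ : Fin n → S1} {φ : Fin n → ℝ}
    (hch : ∀ j, pr (ζ (j + 1)) = pr (ζ j) + (φ j : CircB m)) {i j : Fin n} (hij : i ≤ j) :
    pr (ζ j) = pr (ζ i) + ((∑ l ∈ Finset.Ico i j, φ l : ℝ) : CircB m) := by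
  rw [QuotientAddGroup.mk_sum]
  exact eq_add_sum_Ico_of_forall_add_one (f := fun j => pr (ζ j)) hch hij

theorem gap_bounds_of_mem_uEc {y : Config n} (hy : y ∈ uEc m n pr) {i j : Fin n} (hij : i < j) :
    (y.1 i).2 + (y.1 j).2 ≤ ∑ l ∈ Finset.Ico i j, y.2 l ∧
      (y.1 i).2 + (y.1 j).2 ≤ 2 * π / m - ∑ l ∈ Finset.Ico i j, y.2 l := by
  obtain ⟨hr, hφ, hmeet, hch, hsum⟩ := hy
  set P := ∑ l ∈ Finset.Ico i j, y.2 l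
  have hP0 : 0 ≤ P := Finset.sum_nonneg fun l _ => (hφ l).1
  have hPc : P ≤ 2 * π / m :=
    hsum ▸ Finset.sum_le_sum_of_subset_of_nonneg (Finset.subset_univ _) fun l _ _ => (hφ l).1
  have hcen := pr_eq_add_sum_Ico (ζ := fun j => (y.1 j).1) hch hij.le
  have hfar : ∀ d : ℝ, (d : CircB m) = pr (y.1 j).1 - pr (y.1 i).1 →
      (y.1 i).2 + (y.1 j).2 ≤ |d| := by
    intro d hd
    by_contra! hlt
    obtain ⟨hi, hj⟩ := hmeet i j hij.ne
      ((arcA_inter_nonempty_iff (hr i).1 (hr j).1).mpr ⟨d, hd, .inr hlt⟩)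
    rw [hi, hj, add_zero] at hlt
    exact (abs_nonneg d).not_gt hlt
  constructor
  · simpa [abs_of_nonneg hP0] using hfar P (by rw [hcen]; abel)
  · simpa [abs_of_nonpos (sub_nonpos.mpr hPc)] using
      hfar (P - 2 * π / m) (by rw [AddCircle.coe_sub, AddCircle.coe_period, hcen]; abel)

theorem uE'_subset_uEc : uE' m n pr ⊆ uEc m n pr := fun _ ⟨hr, hφ, hdisj, hch, hsum⟩ =>
  ⟨fun j => Ioc_subset_Icc_self (hr j), fun j => Ioo_subset_Icc_self (hφ j),
    fun i j hij hne => absurd (hdisj i j hij) hne.ne_empty, hch, hsum⟩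

theorem sep_uEc_radius_pos_eq_uE' (hn : 2 ≤ n) :
    {y ∈ uEc m n pr | ∀ j, 0 < (y.1 j).2} = uE' m n pr := by
  ext y
  refine ⟨fun ⟨⟨hr, hφ, hmeet, hch, hsum⟩, hpos⟩ => ?_,
    fun hy => ⟨uE'_subset_uEc hy, fun j => (hy.1 j).1⟩⟩
  have hdisj : ∀ i j, i ≠ j →
      ¬ (arcA m pr (y.1 i).1 (y.1 i).2 ∩ arcA m pr (y.1 j).1 (y.1 j).2).Nonempty :=
    fun i j hij hne => (hpos i).ne' (hmeet i j hij hne).1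
  refine ⟨fun j => ⟨hpos j, (hr j).2⟩, fun k => ?_,
    fun i j hij => not_nonempty_iff_eq_empty.mp (hdisj i j hij), hch, hsum⟩
  -- a gap equal to `0` or to the period would make the centres of arcs `k` and `k + 1` coincide
  have hgap : (y.2 k : CircB m) ≠ 0 := by
    intro h0
    have hk : k ≠ k + 1 := by
      simpa [eq_comm] using (Fin.one_eq_zero_iff (n := n)).not.mpr (by omega)
    exact hdisj k (k + 1) hk ((arcA_inter_nonempty_iff (hr k).1 (hr _).1).mpr
      ⟨0, by rw [hch, h0]; simp, .inl rfl⟩)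
  refine ⟨(hφ k).1.lt_of_ne ?_, (hφ k).2.lt_of_ne ?_⟩
  · rintro h
    exact hgap (by rw [← h, AddCircle.coe_zero])
  · rintro h
    exact hgap (by rw [h, AddCircle.coe_period])

theorem mapsTo_kerP_uEc (hpr : ∀ s : ℝ, pr s = (s : CircB m)) {k : Fin n → S1} {β : CircB m}
    (hk : ∀ j, pr (k j) = β) : MapsTo (kerP n k) (uEc m n pr) (uEc m n pr) := by
  intro y hy
  obtain ⟨hr, hφ, hmeet, hch, hsum⟩ := hy
  have hprk : ∀ j, pr ((y.1 j).1 + k j) = pr (y.1 j).1 + β := fun j => by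
    rw [map_add_of_forall_coe hpr, hk]
  refine ⟨hr, hφ, fun i j hij hne => hmeet i j hij ?_, fun j => ?_, hsum⟩
  · simp only [kerP] at hne
    rw [arcA_inter_nonempty_iff (hr i).1 (hr j).1] at hne ⊢
    simpa only [hprk, add_sub_add_right_eq_sub] using hne
  · simp only [kerP, hprk, hch]
    abel

theorem mapsTo_shiftP_uEc : MapsTo (shiftP n) (uEc m n pr) (uEc m n pr) := by
  intro y hy
  obtain ⟨hr, hφ, hmeet, hch, hsum⟩ := hy
  refine ⟨fun j => hr (j - 1), fun j => hφ (j - 1),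
    fun i j hij => hmeet (i - 1) (j - 1) (by simpa using hij), fun j => ?_, ?_⟩
  · simpa only [shiftP, show j + 1 - 1 = j - 1 + 1 by ring] using hch (j - 1)
  · exact (Equiv.sum_comp (Equiv.subRight (1 : Fin n)) y.2).trans hsum

end Configurations

section Homotopy

variable {m n : ℕ}

def spacing (m n : ℕ) : ℝ := 2 * π / m / n

variable (m n) in
def homotopy (y : Config n) (t : ℝ) : Config n :=
  (fun j => ((y.1 j).1 + (((1 - t) * potential (fun l => spacing m n - y.2 l) j : ℝ) : S1),
      (1 - t) * (spacing m n / 2) + t * (y.1 j).2),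
    fun j => (1 - t) * spacing m n + t * y.2 j)

theorem homotopy_one (y : Config n) : homotopy m n y 1 = y := by
  simp [homotopy]

theorem continuous_homotopy : Continuous fun p : Config n × ℝ => homotopy m n p.1 p.2 := by
  unfold homotopy potential
  fun_prop

theorem homotopy_kerP (k : Fin n → S1) (y : Config n) (t : ℝ) :
    homotopy m n (kerP n k y) t = kerP n k (homotopy m n y t) := by
  simp only [homotopy, kerP, add_right_comm]

variable [NeZero n] {pr : S1 → CircB m}

theorem natCast_mul_spacing : (n : ℝ) * spacing m n = 2 * π / m := by
  rw [spacing, mul_div_cancel₀ _ (Nat.cast_ne_zero.mpr (NeZero.ne n))]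

theorem homotopy_shiftP (y : Config n) (t : ℝ) :
    homotopy m n (shiftP n y) t = shiftP n (homotopy m n y t) := by
  simp only [homotopy, shiftP, potential_comp_sub_one (fun l => spacing m n - y.2 l)]

theorem sum_homotopy_gaps {y : Config n} (hsum : ∑ j, y.2 j = 2 * π / m) (t : ℝ) :
    ∑ j, (homotopy m n y t).2 j = 2 * π / m := by
  simp only [homotopy, Finset.sum_add_distrib, ← Finset.mul_sum, hsum, Finset.sum_const,
    Finset.card_univ, Fintype.card_fin, nsmul_eq_mul, natCast_mul_spacing]
  ring

theorem homotopy_chain (hpr : ∀ s : ℝ, pr s = (s : CircB m)) {y : Config n}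
    (hch : ∀ j, pr (y.1 (j + 1)).1 = pr (y.1 j).1 + (y.2 j : CircB m))
    (hsum : ∑ j, y.2 j = 2 * π / m) (t : ℝ) (j : Fin n) :
    pr ((homotopy m n y t).1 (j + 1)).1 =
      pr ((homotopy m n y t).1 j).1 + ((homotopy m n y t).2 j : CircB m) := by
  have hdefect : ∑ l, (spacing m n - y.2 l) = 0 := by
    simp only [Finset.sum_sub_distrib, hsum, Finset.sum_const, Finset.card_univ, Fintype.card_fin,
      nsmul_eq_mul, natCast_mul_spacing, sub_self]
  simp only [homotopy, map_add_of_forall_coe hpr, hpr, hch, potential_add_one hdefect]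
  rw [add_assoc, add_assoc, ← AddCircle.coe_add, ← AddCircle.coe_add]
  ring_nf

theorem homotopy_arcs_not_meet (hm : 1 ≤ m) (hn : 2 ≤ n) (hpr : ∀ s : ℝ, pr s = (s : CircB m))
    {y : Config n} (hy : y ∈ uEc m n pr) {t : ℝ} (ht₀ : 0 ≤ t) (ht₁ : t < 1) {i j : Fin n}
    (hij : i < j) :
    ¬ (arcA m pr ((homotopy m n y t).1 i).1 ((homotopy m n y t).1 i).2 ∩
      arcA m pr ((homotopy m n y t).1 j).1 ((homotopy m n y t).1 j).2).Nonempty := by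
  obtain ⟨hlo, hhi⟩ := gap_bounds_of_mem_uEc hy hij
  obtain ⟨hr, -, -, hch, hsum⟩ := hy
  set P := ∑ l ∈ Finset.Ico i j, y.2 l
  have ha₁ : (1 : ℝ) ≤ (Finset.Ico i j).card := by
    exact_mod_cast Finset.card_pos.mpr ⟨i, Finset.left_mem_Ico.mpr hij⟩
  have ha₂ : ((Finset.Ico i j).card : ℝ) + 1 ≤ n := by
    rw [Fin.card_Ico]
    exact_mod_cast (by omega : (j : ℕ) - i + 1 ≤ n)
  set a : ℝ := ((Finset.Ico i j).card : ℝ)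
  have hs : 0 < spacing m n := by unfold spacing; positivity
  have hP' :
      ∑ l ∈ Finset.Ico i j, (homotopy m n y t).2 l = (1 - t) * (a * spacing m n) + t * P := by
    simp only [homotopy, Finset.sum_add_distrib, ← Finset.mul_sum, Finset.sum_const, nsmul_eq_mul,
      a, P]
  have hcen := pr_eq_add_sum_Ico (ζ := fun j => ((homotopy m n y t).1 j).1)
    (homotopy_chain hpr hch hsum t) hij.le
  rw [hP'] at hcen
  have h1t : 0 ≤ 1 - t := sub_nonneg.mpr ht₁.le
  have hti := mul_le_mul_of_nonneg_left hlo ht₀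
  have htj := mul_le_mul_of_nonneg_left hhi ht₀
  have hsa := mul_le_mul_of_nonneg_left (mul_le_mul_of_nonneg_right ha₁ hs.le) h1t
  have hsb := mul_le_mul_of_nonneg_left (mul_le_mul_of_nonneg_right ha₂ hs.le) h1t
  rw [natCast_mul_spacing] at hsb
  have hri := mul_nonneg ht₀ (hr i).1
  have hrj := mul_nonneg ht₀ (hr j).1
  have hts := mul_pos (sub_pos.mpr ht₁) hs
  refine not_arcA_inter_nonempty_of_gap (by simp only [homotopy]; positivity)
    (by simp only [homotopy]; positivity) ?_ hcen ?_ ?_ <;> simp only [homotopy] <;> linarith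

theorem homotopy_mem_uE' (hm : 1 ≤ m) (hn : 2 ≤ n) (hpr : ∀ s : ℝ, pr s = (s : CircB m))
    {y : Config n} (hy : y ∈ uEc m n pr) {t : ℝ} (ht₀ : 0 ≤ t) (ht₁ : t < 1) :
    homotopy m n y t ∈ uE' m n pr := by
  obtain ⟨hr, hφ, -, hch, hsum⟩ := id hy
  have hs : 0 < spacing m n := by unfold spacing; positivity
  have hsc : spacing m n ≤ 2 * π / m := by
    rw [← natCast_mul_spacing (n := n)]
    exact le_mul_of_one_le_left hs.le (by exact_mod_cast (NeZero.one_le : 1 ≤ n))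
  have hcombo : ∀ {a b x y : ℝ}, x ∈ Icc a b → y ∈ Icc a b → (1 - t) * x + t * y ∈ Icc a b :=
    fun hx hy => convex_Icc _ _ hx hy (sub_nonneg.mpr ht₁.le) ht₀ (sub_add_cancel 1 t)
  have hrad : ∀ j, 0 < ((homotopy m n y t).1 j).2 := fun j => by
    have := mul_nonneg ht₀ (hr j).1
    have := mul_pos (sub_pos.mpr ht₁) hs
    simp only [homotopy]
    linarith
  rw [← sep_uEc_radius_pos_eq_uE' hn]
  have hs₂ : spacing m n / 2 ≤ π / m := by linarith [show π / m = 2 * π / m / 2 by ring]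
  refine ⟨⟨fun j => hcombo ⟨by positivity, hs₂⟩ (hr j),
    fun j => hcombo ⟨hs.le, hsc⟩ (hφ j), fun i j hij hne => ?_, homotopy_chain hpr hch hsum t,
    sum_homotopy_gaps hsum t⟩, hrad⟩
  exfalso
  rcases hij.lt_or_gt with h | h
  · exact homotopy_arcs_not_meet hm hn hpr hy ht₀ ht₁ h hne
  · exact homotopy_arcs_not_meet hm hn hpr hy ht₀ ht₁ h (by rwa [inter_comm])

theorem homotopy_mem (hm : 1 ≤ m) (hn : 2 ≤ n) (hpr : ∀ s : ℝ, pr s = (s : CircB m))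
    {S : Set (Config n)} (hS' : uE' m n pr ⊆ S) (hSc : S ⊆ uEc m n pr) {y : Config n}
    (hy : y ∈ S) {t : ℝ} (ht : t ∈ Icc (0 : ℝ) 1) : homotopy m n y t ∈ S := by
  rcases ht.2.lt_or_eq with ht₁ | rfl
  · exact hS' (homotopy_mem_uE' hm hn hpr (hSc hy) ht.1 ht₁)
  · rwa [homotopy_one]

theorem equivariance_of_commute_homotopy (hn : 2 ≤ n) {T : Config n → Config n}
    (hT : MapsTo T (uEc m n pr) (uEc m n pr))
    (hpos : ∀ y : Config n, (∀ j, 0 < (y.1 j).2) → ∀ j, 0 < ((T y).1 j).2)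
    (hcomm : ∀ y t, homotopy m n (T y) t = T (homotopy m n y t)) :
    MapsTo T (uE' m n pr) (uE' m n pr) ∧ MapsTo T (uEc m n pr) (uEc m n pr) ∧
      (∀ y ∈ uEc m n pr, homotopy m n (T y) 0 = T (homotopy m n y 0)) ∧
      ∀ t ∈ Icc (0 : ℝ) 1,
        (∀ y ∈ uE' m n pr, homotopy m n (T y) t = T (homotopy m n y t)) ∧
        (∀ y ∈ uEc m n pr, homotopy m n (T y) t = T (homotopy m n y t)) := by
  refine ⟨fun y hy => ?_, hT, fun y _ => hcomm y 0,
    fun t _ => ⟨fun y _ => hcomm y t, fun y _ => hcomm y t⟩⟩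
  rw [← sep_uEc_radius_pos_eq_uE' hn] at hy ⊢
  exact ⟨hT hy.1, hpos y hy.2⟩

end Homotopy

end CyclicArcs

/-- The subspace of `uE^c(n)` where all radii are positive is exactly
`uE′(n)`, and the inclusion `uE′(n) ↪ uE^c(n)` is an equivariant homotopy equivalence:
there are a continuous map `g : uE^c(n) → uE′(n)` and continuous homotopies joining
`g ∘ incl` to the identity of `uE′(n)` and `incl ∘ g` to the identity of `uE^c(n)`, such
that `g` and every time-slice of both homotopies commute with (a) simultaneous
translations, (b) the cyclic shift of indices, and (c) individual translations by
elements of `ker π`. -/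
theorem stmt_6 (m n : ℕ) (hm : 1 ≤ m) (hn : 2 ≤ n) [NeZero n]
    (pr : S1 → CircB m) (hpr : ∀ s : ℝ, pr ((s : ℝ) : S1) = ((s : ℝ) : CircB m)) :
    {y ∈ uEc m n pr | ∀ j, 0 < (y.1 j).2} = uE' m n pr ∧
    ∃ g : ((Fin n → S1 × ℝ) × (Fin n → ℝ)) → ((Fin n → S1 × ℝ) × (Fin n → ℝ)),
    ∃ Hu Hc : (((Fin n → S1 × ℝ) × (Fin n → ℝ)) × ℝ) → (Fin n → S1 × ℝ) × (Fin n → ℝ),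
      Set.MapsTo g (uEc m n pr) (uE' m n pr) ∧
      ContinuousOn g (uEc m n pr) ∧
      ContinuousOn Hu ((uE' m n pr) ×ˢ Icc (0 : ℝ) 1) ∧
      (∀ t ∈ Icc (0 : ℝ) 1, ∀ y ∈ uE' m n pr, Hu (y, t) ∈ uE' m n pr) ∧
      (∀ y ∈ uE' m n pr, Hu (y, 0) = g y ∧ Hu (y, 1) = y) ∧
      ContinuousOn Hc ((uEc m n pr) ×ˢ Icc (0 : ℝ) 1) ∧
      (∀ t ∈ Icc (0 : ℝ) 1, ∀ y ∈ uEc m n pr, Hc (y, t) ∈ uEc m n pr) ∧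
      (∀ y ∈ uEc m n pr, Hc (y, 0) = g y ∧ Hc (y, 1) = y) ∧
      (∀ a : S1,
        Set.MapsTo (transP n a) (uE' m n pr) (uE' m n pr) ∧
        Set.MapsTo (transP n a) (uEc m n pr) (uEc m n pr) ∧
        (∀ y ∈ uEc m n pr, g (transP n a y) = transP n a (g y)) ∧
        (∀ t ∈ Icc (0 : ℝ) 1,
          (∀ y ∈ uE' m n pr, Hu (transP n a y, t) = transP n a (Hu (y, t))) ∧
          (∀ y ∈ uEc m n pr, Hc (transP n a y, t) = transP n a (Hc (y, t))))) ∧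
      (Set.MapsTo (shiftP n) (uE' m n pr) (uE' m n pr) ∧
        Set.MapsTo (shiftP n) (uEc m n pr) (uEc m n pr) ∧
        (∀ y ∈ uEc m n pr, g (shiftP n y) = shiftP n (g y)) ∧
        (∀ t ∈ Icc (0 : ℝ) 1,
          (∀ y ∈ uE' m n pr, Hu (shiftP n y, t) = shiftP n (Hu (y, t))) ∧
          (∀ y ∈ uEc m n pr, Hc (shiftP n y, t) = shiftP n (Hc (y, t))))) ∧
      (∀ k : Fin n → S1, (∀ j, pr (k j) = 0) →
        Set.MapsTo (kerP n k) (uE' m n pr) (uE' m n pr) ∧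
        Set.MapsTo (kerP n k) (uEc m n pr) (uEc m n pr) ∧
        (∀ y ∈ uEc m n pr, g (kerP n k y) = kerP n k (g y)) ∧
        (∀ t ∈ Icc (0 : ℝ) 1,
          (∀ y ∈ uE' m n pr, Hu (kerP n k y, t) = kerP n k (Hu (y, t))) ∧
          (∀ y ∈ uEc m n pr, Hc (kerP n k y, t) = kerP n k (Hc (y, t))))) := by
  open CyclicArcs in
  exact ⟨sep_uEc_radius_pos_eq_uE' hn, fun y => homotopy m n y 0,
    fun p => homotopy m n p.1 p.2, fun p => homotopy m n p.1 p.2,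
    fun y hy => homotopy_mem_uE' hm hn hpr hy le_rfl one_pos,
    (continuous_homotopy.comp (continuous_id.prodMk continuous_const)).continuousOn,
    continuous_homotopy.continuousOn,
    fun t ht y hy => homotopy_mem hm hn hpr subset_rfl uE'_subset_uEc hy ht,
    fun y _ => ⟨rfl, homotopy_one y⟩,
    continuous_homotopy.continuousOn,
    fun t ht y hy => homotopy_mem hm hn hpr uE'_subset_uEc subset_rfl hy ht,
    fun y _ => ⟨rfl, homotopy_one y⟩,
    fun a => equivariance_of_commute_homotopy hn (mapsTo_kerP_uEc hpr fun _ => rfl)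
      (fun _ h => h) (homotopy_kerP _),
    equivariance_of_commute_homotopy hn mapsTo_shiftP_uEc (fun _ h j => h (j - 1))
      homotopy_shiftP,
    fun k hk => equivariance_of_commute_homotopy hn (mapsTo_kerP_uEc hpr hk) (fun _ h => h)
      (homotopy_kerP k)⟩

end
end

section
/- With the circle setup and for n ≥ 1, let E(n) be the subspace of (S¹ × (0, π/m])^n of tuples x = ((ζ_j, r_j))_j whose arcs A(ζ_j, r_j) are pairwise disjoint, and let uE(n) ⊆ E(n) be the subspace of tuples additionally satisfying δ(π(ζ_i) − π(ζ_0)) < δ(π(ζ_j) − π(ζ_0)) whenever 1 ≤ i < j ≤ n−1. Let Σ_n = Perm(Fin n) act on E(n) by (σ•x)_j = x_{σ⁻¹(j)}, and let Z_n = ⟨α⟩ ⊆ Σ_n be generated by the cyclic permutation α : j ↦ j+1 (mod n). Then: (i) the permutation action of Z_n on (S¹ × (0, π/m])^n preserves uE(n); (ii) the map uE(n) × Σ_n → E(n), (x, σ) ↦ σ•x, is surjective and descends to a homeomorphism (uE(n) × Σ_n)/Z_n → E(n), where γ ∈ Z_n acts on uE(n) × Σ_n by γ·(x, σ) = (γ•x,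 σγ⁻¹); (iii) this homeomorphism is equivariant for the Σ_n-actions (ρ acting on the quotient by ρ·[(x, σ)] = [(x, ρσ)] and on E(n) by ρ•) and commutes with simultaneous translation of all circle coordinates ζ_j by a fixed element of S¹. -/
noncomputable section

open Set

/-- The (finite) symmetric group carries the discrete topology. -/
instance (n : ℕ) : TopologicalSpace (Equiv.Perm (Fin n)) := ⊥

/-- The space `E(n)` of configurations of `n` pairwise disjoint arcs. -/
def En (m n : ℕ) (pr : S1 → CircB m) : Set (Fin n → S1 × ℝ) :=
  {x | (∀ j, (x j).2 ∈ Ioc 0 (Real.pi / m)) ∧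
    ∀ i j, i ≠ j → arcA m pr (x i).1 (x i).2 ∩ arcA m pr (x j).1 (x j).2 = ∅}

/-- The subspace `uE(n) ⊆ E(n)` of cyclically ordered configurations. -/
def uE (m n : ℕ) [NeZero n] (pr : S1 → CircB m) (δ : CircB m → ℝ) :
    Set (Fin n → S1 × ℝ) :=
  {x | x ∈ En m n pr ∧
    ∀ i j : Fin n, 0 < (i : ℕ) → (i : ℕ) < (j : ℕ) →
      δ (pr (x i).1 - pr (x 0).1) < δ (pr (x j).1 - pr (x 0).1)}

/-- The permutation action `(σ • x) j = x (σ⁻¹ j)`. -/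
def permAct (n : ℕ) (σ : Equiv.Perm (Fin n)) (x : Fin n → S1 × ℝ) : Fin n → S1 × ℝ :=
  fun j => x (σ⁻¹ j)

/-- Simultaneous translation of all circle coordinates by `a ∈ S¹`. -/
def transX (n : ℕ) (a : S1) (x : Fin n → S1 × ℝ) : Fin n → S1 × ℝ :=
  fun j => ((x j).1 + a, (x j).2)

/-- The relation defining the balanced product `uE(n) ×_{Z_n} Σ_n`:
`γ · (x, σ) = (γ • x, σ γ⁻¹)` for `γ` in the cyclic group `Z_n = ⟨(1 ⋯ n)⟩`. -/
def balRel (m n : ℕ) [NeZero n] (pr : S1 → CircB m) (δ : CircB m → ℝ) :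
    (↥(uE m n pr δ) × Equiv.Perm (Fin n)) → (↥(uE m n pr δ) × Equiv.Perm (Fin n)) → Prop :=
  fun p p' => ∃ γ ∈ Subgroup.zpowers (finRotate n),
    (p'.1 : Fin n → S1 × ℝ) = permAct n γ (p.1 : Fin n → S1 × ℝ) ∧ p'.2 = p.2 * γ⁻¹

/-!
Disjoint arcs have distinct centres, so a configuration `y ∈ E(n)` has `n` distinct centres in
`B`, and `σ⁻¹ • y ∈ uE(n)` says that `σ` lists them counterclockwise starting from `y (σ 0)`.
Measuring angles from the second centre instead of the first subtracts one fixed angle from all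
the others, so `σ α` is again such a listing; and for a prescribed starting centre the listing is
unique, being the permutation that sorts the angles. Hence these `σ` form a single coset `σ Z_n`,
which gives (i) and the bijectivity of `uE(n) ×_{Z_n} Σ_n → E(n)`. Since `Σ_n` is discrete, acts
on `E(n)` by homeomorphisms, and `uE(n)` is open in `E(n)` (angles are continuous away from `0`,
and centres never collide), the map `(x, σ) ↦ σ • x` is continuous and open, so the bijection is a
homeomorphism.
-/

open Equiv Function

def IsIocSection (p : ℝ) (δ : AddCircle p → ℝ) : Prop :=
  ∀ z, δ z ∈ Ioc 0 p ∧ (δ z : AddCircle p) = z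

namespace IsIocSection

variable {p : ℝ} {δ : AddCircle p → ℝ}

theorem period_pos (hδ : IsIocSection p δ) : 0 < p :=
  (hδ 0).1.1.trans_le (hδ 0).1.2

theorem apply_coe (hδ : IsIocSection p δ) {s : ℝ} (hs : s ∈ Ioc 0 p) : δ s = s := by
  have := Fact.mk hδ.period_pos
  exact (AddCircle.coe_eq_coe_iff_of_mem_Ioc (a := 0) (by simpa using (hδ s).1)
    (by simpa using hs)).1 (hδ s).2

theorem injective (hδ : IsIocSection p δ) : Injective δ :=
  LeftInverse.injective fun z => (hδ z).2

theorem apply_zero (hδ : IsIocSection p δ) : δ 0 = p := by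
  simpa only [AddCircle.coe_period] using hδ.apply_coe ⟨hδ.period_pos, le_rfl⟩

theorem lt_of_ne_zero (hδ : IsIocSection p δ) {z : AddCircle p} (hz : z ≠ 0) : δ z < p :=
  (hδ z).1.2.lt_of_ne fun h => hz (hδ.injective (h.trans hδ.apply_zero.symm))

theorem apply_sub (hδ : IsIocSection p δ) {u v : AddCircle p} (h : δ u < δ v) :
    δ (v - u) = δ v - δ u := by
  have hcoe : ((δ v - δ u : ℝ) : AddCircle p) = v - u := by
    rw [AddCircle.coe_sub, (hδ v).2, (hδ u).2]
  rw [← hcoe, hδ.apply_coe ⟨sub_pos.2 h, by linarith [(hδ u).1.1, (hδ v).1.2]⟩]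

theorem continuousAt (hδ : IsIocSection p δ) {z : AddCircle p} (hz : z ≠ 0) :
    ContinuousAt δ z := by
  have := Fact.mk hδ.period_pos
  have hδ_eq : δ = fun w => (AddCircle.equivIoc p 0 w : ℝ) := funext fun w => by
    have hmem : (AddCircle.equivIoc p 0 w : ℝ) ∈ Ioc 0 p := by
      simpa using (AddCircle.equivIoc p 0 w).2
    rw [← hδ.apply_coe hmem, AddCircle.coe_equivIoc]
  rw [hδ_eq]
  exact continuous_subtype_val.continuousAt.comp (AddCircle.continuousAt_equivIoc p 0 hz)

end IsIocSection

def CcwSorted {p : ℝ} {n : ℕ} [NeZero n] (δ : AddCircle p → ℝ) (z : Fin n → AddCircle p)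
    (σ : Perm (Fin n)) : Prop :=
  ∀ i j : Fin n, 0 < (i : ℕ) → (i : ℕ) < (j : ℕ) → δ (z (σ i) - z (σ 0)) < δ (z (σ j) - z (σ 0))

namespace CcwSorted

variable {p : ℝ} {δ : AddCircle p → ℝ} {n : ℕ} {z : Fin (n + 1) → AddCircle p}
  {σ τ : Perm (Fin (n + 1))}

theorem strictMono (hδ : IsIocSection p δ) (hz : Injective z) (hσ : CcwSorted δ z σ) :
    StrictMono fun k => δ (z (σ (k + 1)) - z (σ 0)) := by
  intro k l hkl
  have hk1 : ((k + 1 : Fin (n + 1)) : ℕ) = k + 1 :=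
    Fin.val_add_one_of_lt (hkl.trans_le (Fin.le_last l))
  rcases (Fin.le_last l).lt_or_eq with hl | rfl
  · refine hσ _ _ (by omega) ?_
    rw [hk1, Fin.val_add_one_of_lt hl]
    exact Nat.succ_lt_succ hkl
  · have hk1_ne : k + 1 ≠ 0 := fun h => by simp [h] at hk1
    simp only [Fin.last_add_one, sub_self, hδ.apply_zero]
    exact hδ.lt_of_ne_zero (sub_ne_zero.2 (hz.ne (σ.injective.ne hk1_ne)))

theorem of_strictMono (h : StrictMono fun k => δ (z (σ (k + 1)) - z (σ 0))) :
    CcwSorted δ z σ := by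
  intro i j hi hij
  have hi0 : i ≠ 0 := fun h => by simp [h] at hi
  have hj0 : j ≠ 0 := fun h => by simp [h] at hij
  have hlt : i - 1 < j - 1 := by
    rw [Fin.lt_def, Fin.coe_sub_one, Fin.coe_sub_one, if_neg hi0, if_neg hj0]
    omega
  simpa only [sub_add_cancel] using h hlt

theorem mul_finRotate_eq_sort (hδ : IsIocSection p δ) (hz : Injective z)
    (hσ : CcwSorted δ z σ) :
    σ * finRotate (n + 1) = Tuple.sort fun w => δ (z w - z (σ 0)) := by
  have hmono : StrictMono ((fun w => δ (z w - z (σ 0))) ∘ (σ * finRotate (n + 1))) := by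
    simpa only [comp_def, Perm.mul_apply, finRotate_apply] using hσ.strictMono hδ hz
  exact Tuple.eq_sort_iff.2 ⟨hmono.monotone, fun i j hij h => absurd h (hmono hij).ne⟩

theorem eq_of_apply_zero_eq (hδ : IsIocSection p δ) (hz : Injective z)
    (hσ : CcwSorted δ z σ) (hτ : CcwSorted δ z τ) (h0 : σ 0 = τ 0) : σ = τ := by
  apply mul_right_cancel (b := finRotate (n + 1))
  rw [hσ.mul_finRotate_eq_sort hδ hz, hτ.mul_finRotate_eq_sort hδ hz, h0]

theorem mul_finRotate (hδ : IsIocSection p δ) (hz : Injective z) (hσ : CcwSorted δ z σ) :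
    CcwSorted δ z (σ * finRotate (n + 1)) := by
  intro i j hi hij
  have hmono := hσ.strictMono hδ hz
  -- angles seen from `z (σ 1)` are angles seen from `z (σ 0)` shifted by a constant
  have hshift : ∀ k : Fin (n + 1), 0 < (k : ℕ) → δ (z (σ (k + 1)) - z (σ 1)) =
      δ (z (σ (k + 1)) - z (σ 0)) - δ (z (σ 1) - z (σ 0)) := fun k hk => by
    rw [← hδ.apply_sub (by simpa only [zero_add] using hmono (show 0 < k from hk)),
      sub_sub_sub_cancel_right]
  simp only [Perm.mul_apply, finRotate_apply, zero_add]
  rw [hshift i hi, hshift j (hi.trans hij)]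
  exact sub_lt_sub_right (hmono hij) _

theorem mul_pow_finRotate (hδ : IsIocSection p δ) (hz : Injective z) (hσ : CcwSorted δ z σ)
    (k : ℕ) : CcwSorted δ z (σ * finRotate (n + 1) ^ k) := by
  induction k with
  | zero => simpa using hσ
  | succ k ih => simpa only [pow_succ, ← mul_assoc] using ih.mul_finRotate hδ hz

theorem mul_mem_zpowers (hδ : IsIocSection p δ) (hz : Injective z) (hσ : CcwSorted δ z σ)
    {γ : Perm (Fin (n + 1))} (hγ : γ ∈ Subgroup.zpowers (finRotate (n + 1))) :
    CcwSorted δ z (σ * γ) := by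
  obtain ⟨k, rfl⟩ := (Submonoid.mem_powers_iff _ _).1
    ((isOfFinOrder_of_finite _).mem_powers_iff_mem_zpowers.2 hγ)
  exact hσ.mul_pow_finRotate hδ hz k

theorem exists_mem_zpowers_eq_mul (hδ : IsIocSection p δ) (hz : Injective z)
    (hσ : CcwSorted δ z σ) (hτ : CcwSorted δ z τ) :
    ∃ γ ∈ Subgroup.zpowers (finRotate (n + 1)), τ = σ * γ := by
  refine ⟨finRotate (n + 1) ^ (σ.symm (τ 0) : ℕ), Subgroup.npow_mem_zpowers _ _,
    ((hσ.mul_pow_finRotate hδ hz _).eq_of_apply_zero_eq hδ hz hτ ?_).symm⟩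
  rw [Perm.mul_apply, Perm.coe_pow, ← finCycle_eq_finRotate_iterate, finCycle_apply, zero_add,
    apply_symm_apply]

end CcwSorted

theorem exists_ccwSorted {p : ℝ} {δ : AddCircle p → ℝ} {n : ℕ} {z : Fin (n + 1) → AddCircle p}
    (hδ : IsIocSection p δ) (hz : Injective z) (b : Fin (n + 1)) :
    ∃ σ : Perm (Fin (n + 1)), CcwSorted δ z σ ∧ σ 0 = b := by
  set g : Fin (n + 1) → ℝ := fun w => δ (z w - z b)
  have hg : Injective g := fun u v h => hz (sub_left_injective (hδ.injective h))
  set s := Tuple.sort g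
  have hs_mono : Monotone (g ∘ s) := Tuple.monotone_sort g
  have hs : StrictMono (g ∘ s) := hs_mono.strictMono_of_injective (hg.comp s.injective)
  -- `b` is seen at the full angle `δ 0 = p`, the largest one
  have hlast : s (Fin.last n) = b := hg <| le_antisymm
    (by simpa only [g, sub_self, hδ.apply_zero] using (hδ _).1.2)
    (by simpa only [comp_apply, apply_symm_apply] using hs_mono (Fin.le_last (s.symm b)))
  have hσ0 : (s * (finRotate (n + 1))⁻¹) 0 = b := by
    rw [Perm.mul_apply, Perm.inv_def, (finRotate (n + 1)).symm_apply_eq.2 finRotate_last.symm,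
      hlast]
  refine ⟨s * (finRotate (n + 1))⁻¹, CcwSorted.of_strictMono ?_, hσ0⟩
  rw [hσ0]
  simp only [Perm.mul_apply, Perm.inv_def, finRotate_symm_apply, add_sub_cancel_right]
  exact hs

theorem ccwSorted_add_const_iff {p : ℝ} {δ : AddCircle p → ℝ} {n : ℕ} [NeZero n]
    {z : Fin n → AddCircle p} {σ : Perm (Fin n)} (c : AddCircle p) :
    CcwSorted δ (fun j => z j + c) σ ↔ CcwSorted δ z σ := by
  simp only [CcwSorted, add_sub_add_right_eq_sub]

section CoeCompatible

variable {p q : ℝ} {f : AddCircle p → AddCircle q}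

theorem AddCircle.map_add_of_coe (hf : ∀ s : ℝ, f s = s) (u v : AddCircle p) :
    f (u + v) = f u + f v := by
  induction u using QuotientAddGroup.induction_on
  induction v using QuotientAddGroup.induction_on
  rw [← AddCircle.coe_add, hf, hf, hf, AddCircle.coe_add]

theorem AddCircle.continuous_of_coe (hf : ∀ s : ℝ, f s = s) : Continuous f :=
  (QuotientAddGroup.isQuotientMap_mk _).continuous_iff.2 <| by
    rw [show f ∘ (↑) = ((↑) : ℝ → AddCircle q) from funext hf]
    exact continuous_quotient_mk'

end CoeCompatible

section Configurations

variable {m n : ℕ} {pr : S1 → CircB m} {δ : CircB m → ℝ}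

def centers (pr : S1 → CircB m) (x : Fin n → S1 × ℝ) : Fin n → CircB m :=
  fun j => pr (x j).1

theorem injective_centers_of_mem_En {x : Fin n → S1 × ℝ} (hx : x ∈ En m n pr) :
    Injective (centers pr x) := by
  intro i j h
  by_contra hij
  exact (hx.2 i j hij).subset ⟨mem_insert _ _, (h ▸ mem_insert _ _ : centers pr x i ∈ _)⟩

theorem mem_uE_iff [NeZero n] {x : Fin n → S1 × ℝ} :
    x ∈ uE m n pr δ ↔ x ∈ En m n pr ∧ CcwSorted δ (centers pr x) 1 :=
  Iff.rfl

theorem permAct_mul (σ τ : Perm (Fin n)) (x : Fin n → S1 × ℝ) :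
    permAct n σ (permAct n τ x) = permAct n (σ * τ) x :=
  rfl

theorem permAct_one (x : Fin n → S1 × ℝ) : permAct n 1 x = x :=
  rfl

theorem permAct_inv_permAct (σ : Perm (Fin n)) (x : Fin n → S1 × ℝ) :
    permAct n σ⁻¹ (permAct n σ x) = x := by
  rw [permAct_mul, inv_mul_cancel, permAct_one]

theorem permAct_permAct_inv (σ : Perm (Fin n)) (x : Fin n → S1 × ℝ) :
    permAct n σ (permAct n σ⁻¹ x) = x := by
  rw [permAct_mul, mul_inv_cancel, permAct_one]

theorem continuous_permAct (σ : Perm (Fin n)) : Continuous (permAct n σ) :=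
  continuous_pi fun j => continuous_apply (σ⁻¹ j)

theorem permAct_mem_En (σ : Perm (Fin n)) {x : Fin n → S1 × ℝ} (hx : x ∈ En m n pr) :
    permAct n σ x ∈ En m n pr :=
  ⟨fun _ => hx.1 _, fun _ _ hij => hx.2 _ _ (σ⁻¹.injective.ne hij)⟩

theorem permAct_inv_mem_uE_iff [NeZero n] (σ : Perm (Fin n)) {y : Fin n → S1 × ℝ}
    (hy : y ∈ En m n pr) : permAct n σ⁻¹ y ∈ uE m n pr δ ↔ CcwSorted δ (centers pr y) σ :=
  and_iff_right (permAct_mem_En σ⁻¹ hy)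

theorem arcA_add (hpr : ∀ s : ℝ, pr s = s) (ζ a : S1) (r : ℝ) :
    arcA m pr (ζ + a) r = (· - pr a) ⁻¹' arcA m pr ζ r := by
  ext w
  simp only [arcA, AddCircle.map_add_of_coe hpr, mem_preimage, mem_insert_iff, mem_ofPred_eq,
    sub_eq_iff_eq_add, add_right_comm]

theorem transX_mem_En (hpr : ∀ s : ℝ, pr s = s) (a : S1) {x : Fin n → S1 × ℝ}
    (hx : x ∈ En m n pr) : transX n a x ∈ En m n pr :=
  ⟨hx.1, fun i j hij => by
    simp only [transX, arcA_add hpr, ← preimage_inter, hx.2 i j hij, preimage_empty]⟩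

theorem transX_mem_uE [NeZero n] (hpr : ∀ s : ℝ, pr s = s) (a : S1) {x : Fin n → S1 × ℝ}
    (hx : x ∈ uE m n pr δ) : transX n a x ∈ uE m n pr δ := by
  have hcenters : centers pr (transX n a x) = fun j => centers pr x j + pr a :=
    funext fun j => AddCircle.map_add_of_coe hpr _ _
  rw [mem_uE_iff, hcenters, ccwSorted_add_const_iff]
  exact ⟨transX_mem_En hpr a hx.1, hx.2⟩

theorem isOpen_uE [NeZero n] (hpr : ∀ s : ℝ, pr s = s) (hδ : IsIocSection _ δ) :
    IsOpen ((↑) ⁻¹' uE m n pr δ : Set (En m n pr)) := by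
  have hpr_cont := AddCircle.continuous_of_coe hpr
  have hangle : ∀ k : Fin n, k ≠ 0 →
      Continuous fun x : En m n pr => δ (centers pr x.1 k - centers pr x.1 0) := fun k hk => by
    have hcenter : ∀ i : Fin n, Continuous fun x : En m n pr => centers pr x.1 i := fun i =>
      hpr_cont.comp ((continuous_apply i).comp continuous_subtype_val).fst
    exact continuous_iff_continuousAt.2 fun x =>
      ContinuousAt.comp (f := fun x : En m n pr => centers pr x.1 k - centers pr x.1 0)
        (hδ.continuousAt (sub_ne_zero.2 ((injective_centers_of_mem_En x.2).ne hk)))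
        ((hcenter k).sub (hcenter 0)).continuousAt
  have huE : ((↑) ⁻¹' uE m n pr δ : Set (En m n pr)) =
      {x : En m n pr | CcwSorted δ (centers pr x.1) 1} :=
    ext fun x => and_iff_right x.2
  simp only [huE, CcwSorted, Perm.one_apply, ofPred_forall]
  refine isOpen_iInter_of_finite fun i => isOpen_iInter_of_finite fun j =>
    isOpen_iInter_of_finite fun hi => isOpen_iInter_of_finite fun hij =>
      isOpen_lt (hangle i ?_) (hangle j ?_)
  · rintro rfl; simp at hi
  · rintro rfl; simp at hij

end Configurations

section BalancedProduct

variable {m n : ℕ} {pr : S1 → CircB m} {δ : CircB m → ℝ}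

instance : DiscreteTopology (Perm (Fin n)) := ⟨rfl⟩

def permHomeomorph (σ : Perm (Fin n)) : En m n pr ≃ₜ En m n pr where
  toFun x := ⟨permAct n σ x, permAct_mem_En σ x.2⟩
  invFun x := ⟨permAct n σ⁻¹ x, permAct_mem_En σ⁻¹ x.2⟩
  left_inv x := Subtype.ext (permAct_inv_permAct σ x)
  right_inv x := Subtype.ext (permAct_permAct_inv σ x)
  continuous_toFun := ((continuous_permAct σ).comp continuous_subtype_val).subtype_mk _
  continuous_invFun := ((continuous_permAct σ⁻¹).comp continuous_subtype_val).subtype_mk _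

theorem permAct_mem_uE_of_mem_zpowers (hδ : IsIocSection _ δ) {γ : Perm (Fin (n + 1))}
    (hγ : γ ∈ Subgroup.zpowers (finRotate (n + 1))) {x : Fin (n + 1) → S1 × ℝ}
    (hx : x ∈ uE m (n + 1) pr δ) : permAct (n + 1) γ x ∈ uE m (n + 1) pr δ := by
  rw [← inv_inv γ, permAct_inv_mem_uE_iff _ hx.1, ← one_mul γ⁻¹]
  exact (mem_uE_iff.1 hx).2.mul_mem_zpowers hδ (injective_centers_of_mem_En hx.1) (inv_mem hγ)

theorem exists_mem_uE_permAct_eq (hδ : IsIocSection _ δ) {y : Fin (n + 1) → S1 × ℝ}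
    (hy : y ∈ En m (n + 1) pr) :
    ∃ x ∈ uE m (n + 1) pr δ, ∃ σ : Perm (Fin (n + 1)), permAct (n + 1) σ x = y := by
  obtain ⟨σ, hσ, -⟩ := exists_ccwSorted hδ (injective_centers_of_mem_En hy) 0
  exact ⟨_, (permAct_inv_mem_uE_iff σ hy).2 hσ, σ, permAct_permAct_inv σ y⟩

variable (m n pr δ) in
def actMap [NeZero n] (p : uE m n pr δ × Perm (Fin n)) : En m n pr :=
  permHomeomorph p.2 (Set.inclusion (fun _ hx => hx.1) p.1)

theorem actMap_eq_of_balRel [NeZero n] {p p' : uE m n pr δ × Perm (Fin n)}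
    (h : balRel m n pr δ p p') : actMap m n pr δ p = actMap m n pr δ p' := by
  obtain ⟨γ, -, hx, hσ⟩ := h
  refine Subtype.ext ?_
  change permAct n p.2 p.1 = permAct n p'.2 p'.1
  rw [hx, hσ, permAct_mul, inv_mul_cancel_right]

theorem balRel_of_actMap_eq (hδ : IsIocSection _ δ) {p p' : uE m (n + 1) pr δ × Perm (Fin (n + 1))}
    (h : actMap m (n + 1) pr δ p = actMap m (n + 1) pr δ p') : balRel m (n + 1) pr δ p p' := by
  obtain ⟨⟨x, hx⟩, σ⟩ := p
  obtain ⟨⟨x', hx'⟩, τ⟩ := p'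
  set y := permAct (n + 1) σ x
  have hy : y ∈ En m (n + 1) pr := permAct_mem_En σ hx.1
  have hx_eq : x = permAct (n + 1) σ⁻¹ y := (permAct_inv_permAct σ x).symm
  have hx'_eq : x' = permAct (n + 1) τ⁻¹ y := by
    rw [show y = permAct (n + 1) τ x' from congrArg Subtype.val h, permAct_inv_permAct]
  have hz := injective_centers_of_mem_En hy
  obtain ⟨γ, hγ, rfl⟩ := ((permAct_inv_mem_uE_iff σ hy).1 (hx_eq ▸ hx)).exists_mem_zpowers_eq_mul
    hδ hz ((permAct_inv_mem_uE_iff τ hy).1 (hx'_eq ▸ hx'))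
  refine ⟨γ⁻¹, inv_mem hγ, ?_, by rw [inv_inv]⟩
  change x' = permAct (n + 1) γ⁻¹ x
  rw [hx'_eq, mul_inv_rev, ← permAct_mul, ← hx_eq]

theorem continuous_actMap [NeZero n] : Continuous (actMap m n pr δ) :=
  continuous_prod_of_discrete_right.2 fun σ =>
    (permHomeomorph σ).continuous.comp (continuous_inclusion _)

theorem isOpenMap_actMap [NeZero n] (hpr : ∀ s : ℝ, pr s = s) (hδ : IsIocSection _ δ) :
    IsOpenMap (actMap m n pr δ) :=
  isOpenMap_prod_of_discrete_right.2 fun σ =>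
    (permHomeomorph σ).isOpenMap.comp
      (Topology.IsOpenEmbedding.inclusion _ (isOpen_uE hpr hδ)).isOpenMap

def balancedHomeomorph (hpr : ∀ s : ℝ, pr s = s) (hδ : IsIocSection _ δ) :
    Quot (balRel m (n + 1) pr δ) ≃ₜ En m (n + 1) pr :=
  Equiv.toHomeomorphOfContinuousOpen
    (Equiv.ofBijective (Quot.lift (actMap m (n + 1) pr δ) fun _ _ => actMap_eq_of_balRel)
      ⟨fun q q' => Quot.induction_on₂ q q' fun _ _ h => Quot.sound (balRel_of_actMap_eq hδ h),
        fun y => by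
          obtain ⟨x, hx, σ, hxy⟩ := exists_mem_uE_permAct_eq hδ y.2
          exact ⟨Quot.mk _ (⟨x, hx⟩, σ), Subtype.ext hxy⟩⟩)
    (continuous_quot_lift _ continuous_actMap)
    (IsOpenMap.of_comp continuous_quot_mk Quot.mk_surjective (isOpenMap_actMap hpr hδ))

end BalancedProduct

theorem stmt_15_general (m n : ℕ) [NeZero n]
    (pr : S1 → CircB m) (hpr : ∀ s : ℝ, pr ((s : ℝ) : S1) = ((s : ℝ) : CircB m))
    (δ : CircB m → ℝ)
    (hδ : ∀ z : CircB m, δ z ∈ Ioc 0 (2 * Real.pi / m) ∧ ((δ z : ℝ) : CircB m) = z) :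
    -- (i)
    (∀ γ ∈ Subgroup.zpowers (finRotate n),
      Set.MapsTo (permAct n γ) (uE m n pr δ) (uE m n pr δ)) ∧
    -- (ii) and (iii)
    (∀ y ∈ En m n pr, ∃ x ∈ uE m n pr δ, ∃ σ : Equiv.Perm (Fin n), permAct n σ x = y) ∧
    ∃ e : Quot (balRel m n pr δ) ≃ₜ ↥(En m n pr),
      (∀ (x : ↥(uE m n pr δ)) (σ : Equiv.Perm (Fin n)),
        (e (Quot.mk _ (x, σ))).val = permAct n σ x.val) ∧
      (∀ (ρ : Equiv.Perm (Fin n)) (x : ↥(uE m n pr δ)) (σ : Equiv.Perm (Fin n)),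
        (e (Quot.mk _ (x, ρ * σ))).val = permAct n ρ (e (Quot.mk _ (x, σ))).val) ∧
      (∀ a : S1, Set.MapsTo (transX n a) (uE m n pr δ) (uE m n pr δ) ∧
        Set.MapsTo (transX n a) (En m n pr) (En m n pr) ∧
        ∀ (x : ↥(uE m n pr δ)) (hx : transX n a x.val ∈ uE m n pr δ)
          (σ : Equiv.Perm (Fin n)),
          (e (Quot.mk _ (⟨transX n a x.val, hx⟩, σ))).val =
            transX n a (e (Quot.mk _ (x, σ))).val) := by
  obtain ⟨n, rfl⟩ := Nat.exists_eq_succ_of_ne_zero (NeZero.ne n)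
  exact ⟨fun γ hγ x hx => permAct_mem_uE_of_mem_zpowers hδ hγ hx,
    fun y hy => exists_mem_uE_permAct_eq hδ hy,
    balancedHomeomorph hpr hδ, fun _ _ => rfl, fun ρ x σ => (permAct_mul ρ σ x).symm,
    fun a => ⟨fun _ hx => transX_mem_uE hpr a hx, fun _ hx => transX_mem_En hpr a hx,
      fun _ _ _ => rfl⟩⟩

/-- (i) The cyclic group `Z_n = ⟨(1 ⋯ n)⟩ ≤ Σ_n` preserves `uE(n)`;
(ii) the map `(x, σ) ↦ σ • x` from `uE(n) × Σ_n` onto `E(n)` is surjective and descends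
to a homeomorphism from the balanced product `(uE(n) × Σ_n)/Z_n` to `E(n)`;
(iii) this homeomorphism is `Σ_n`-equivariant and commutes with simultaneous translation
of the circle coordinates. -/
theorem stmt_15 (m n : ℕ) (hm : 1 ≤ m) (hn : 1 ≤ n) [NeZero n]
    (pr : S1 → CircB m) (hpr : ∀ s : ℝ, pr ((s : ℝ) : S1) = ((s : ℝ) : CircB m))
    (δ : CircB m → ℝ)
    (hδ : ∀ z : CircB m, δ z ∈ Ioc 0 (2 * Real.pi / m) ∧ ((δ z : ℝ) : CircB m) = z) :
    -- (i)
    (∀ γ ∈ Subgroup.zpowers (finRotate n),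
      Set.MapsTo (permAct n γ) (uE m n pr δ) (uE m n pr δ)) ∧
    -- (ii) and (iii)
    (∀ y ∈ En m n pr, ∃ x ∈ uE m n pr δ, ∃ σ : Equiv.Perm (Fin n), permAct n σ x = y) ∧
    ∃ e : Quot (balRel m n pr δ) ≃ₜ ↥(En m n pr),
      (∀ (x : ↥(uE m n pr δ)) (σ : Equiv.Perm (Fin n)),
        (e (Quot.mk _ (x, σ))).val = permAct n σ x.val) ∧
      (∀ (ρ : Equiv.Perm (Fin n)) (x : ↥(uE m n pr δ)) (σ : Equiv.Perm (Fin n)),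
        (e (Quot.mk _ (x, ρ * σ))).val = permAct n ρ (e (Quot.mk _ (x, σ))).val) ∧
      (∀ a : S1, Set.MapsTo (transX n a) (uE m n pr δ) (uE m n pr δ) ∧
        Set.MapsTo (transX n a) (En m n pr) (En m n pr) ∧
        ∀ (x : ↥(uE m n pr δ)) (hx : transX n a x.val ∈ uE m n pr δ)
          (σ : Equiv.Perm (Fin n)),
          (e (Quot.mk _ (⟨transX n a x.val, hx⟩, σ))).val =
            transX n a (e (Quot.mk _ (x, σ))).val) :=
  stmt_15_general m n pr hpr δ hδ
end
end
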